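/- arXiv:1310.6854 — 6 statements merged into one kernel-verified Lean document; each statement's English description precedes it below -/
import Mathlib

section
/- Let A be a complete normed unital associative ℝ-algebra (a real Banach algebra). For all x, y ∈ A one has exp(x)·y·exp(−x) = exp(ad_x)(y) = Σ_{k≥0} (ad_x)^k(y)/k!, where ad_x(z) := x·z − z·x; i.e. the conjugation of y by exp(x) is given by the (always convergent) exponential of the adjoint operator ad_x. -/
/-!
Write `ad_x = L_x - R_x` with `L_x z = x z` and `R_x z = z x`. Left and right multiplications
commute by associativity, so `exp (ad_x) = exp (L_x) * exp (-R_x)`. Moreover `L` is a continuous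
ring homomorphism and `R` a continuous ring homomorphism out of the opposite algebra, and such maps
commute with `exp`; hence `exp (L_x) = L_{exp x}` and `exp (-R_x) = R_{exp (-x)}`.
-/

open NormedSpace

namespace NormedSpace

theorem mem_eball_expSeries_radius (𝕜 : Type*) {A : Type*} [RCLike 𝕜] [NormedRing A]
    [NormedAlgebra 𝕜 A] (x : A) : x ∈ Metric.eball (0 : A) (expSeries 𝕜 A).radius :=
  (expSeries_radius_eq_top 𝕜 A).symm ▸ edist_lt_top _ _

/- Mathlib's `map_exp` and `exp_add_of_commute` ask for a `ℚ`-algebra structure, which is not an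
instance on `A →L[𝕜] A`; these variants use the `𝕜`-structure instead. -/

theorem map_exp' (𝕜 : Type*) {A B F : Type*} [RCLike 𝕜] [NormedRing A] [NormedAlgebra 𝕜 A]
    [CompleteSpace A] [NormedRing B] [NormedAlgebra 𝕜 B] [FunLike F A B] [RingHomClass F A B]
    (f : F) (hf : Continuous f) (x : A) : f (exp x) = exp (f x) :=
  map_exp_of_mem_ball f hf x (mem_eball_expSeries_radius 𝕜 x)

theorem exp_add_of_commute' (𝕜 : Type*) {A : Type*} [RCLike 𝕜] [NormedRing A]
    [NormedAlgebra 𝕜 A] [CompleteSpace A] {x y : A} (hxy : Commute x y) :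
    exp (x + y) = exp x * exp y :=
  exp_add_of_commute_of_mem_ball hxy (mem_eball_expSeries_radius 𝕜 x)
    (mem_eball_expSeries_radius 𝕜 y)

end NormedSpace

namespace ContinuousLinearMap

variable {𝕜 A : Type*} [RCLike 𝕜] [NormedRing A] [NormedAlgebra 𝕜 A]

noncomputable def mulRingHom : A →+* (A →L[𝕜] A) where
  toFun := mul 𝕜 A
  map_one' := by ext; simp
  map_mul' a b := by ext; simp [mul_assoc]
  map_zero' := map_zero _
  map_add' := map_add _

noncomputable def flipMulRingHom : Aᵐᵒᵖ →+* (A →L[𝕜] A) where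
  toFun a := (mul 𝕜 A).flip a.unop
  map_one' := by ext; simp
  map_mul' a b := by ext; simp [mul_assoc]
  map_zero' := by ext; simp
  map_add' a b := by ext; simp

theorem commute_mul_flip_mul (a b : A) : Commute (mul 𝕜 A a) ((mul 𝕜 A).flip b) := by
  ext; simp [mul_assoc]

variable [CompleteSpace A]

theorem exp_mul (x : A) : exp (mul 𝕜 A x) = mul 𝕜 A (exp x) :=
  (map_exp' 𝕜 (mulRingHom (𝕜 := 𝕜)) (mul 𝕜 A).continuous x).symm

theorem exp_flip_mul (x : A) : exp ((mul 𝕜 A).flip x) = (mul 𝕜 A).flip (exp x) := by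
  have hcont : Continuous (flipMulRingHom (𝕜 := 𝕜) (A := A)) :=
    (mul 𝕜 A).flip.continuous.comp MulOpposite.continuous_unop
  have h := map_exp' 𝕜 _ hcont (MulOpposite.op x)
  rw [exp_op] at h
  exact h.symm

theorem exp_apply_eq_tsum {E : Type*} [NormedAddCommGroup E] [NormedSpace 𝕜 E] [CompleteSpace E]
    (T : E →L[𝕜] E) (y : E) : exp T y = ∑' k : ℕ, (k.factorial : 𝕜)⁻¹ • (T ^ k) y := by
  rw [exp_eq_tsum 𝕜]
  exact (apply 𝕜 E y).map_tsum (expSeries_summable' T)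

theorem exp_mul_sub_flip_mul_apply (x y : A) :
    exp (mul 𝕜 A x - (mul 𝕜 A).flip x) y = exp x * y * exp (-x) := by
  rw [sub_eq_add_neg, ← map_neg, exp_add_of_commute' 𝕜 (commute_mul_flip_mul x (-x)), exp_mul,
    exp_flip_mul]
  simp [mul_assoc]

end ContinuousLinearMap

/-- In a real Banach algebra `A`, for all `x, y ∈ A`,
`exp(x)·y·exp(−x) = exp(ad_x)(y) = Σ_{k≥0} (ad_x)^k(y)/k!`, where
`ad_x(z) = x·z − z·x` (here realized as the continuous linear map
`ContinuousLinearMap.mul ℝ A x - (ContinuousLinearMap.mul ℝ A).flip x`). -/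
theorem exp_conj_eq_exp_ad
    {A : Type*} [NormedRing A] [NormedAlgebra ℝ A] [CompleteSpace A]
    (x y : A) :
    exp x * y * exp (-x)
      = exp (ContinuousLinearMap.mul ℝ A x - (ContinuousLinearMap.mul ℝ A).flip x) y ∧
    exp (ContinuousLinearMap.mul ℝ A x - (ContinuousLinearMap.mul ℝ A).flip x) y
      = ∑' k : ℕ, (k.factorial : ℝ)⁻¹ •
          ((ContinuousLinearMap.mul ℝ A x - (ContinuousLinearMap.mul ℝ A).flip x) ^ k) y :=
  ⟨(ContinuousLinearMap.exp_mul_sub_flip_mul_apply x y).symm,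
    ContinuousLinearMap.exp_apply_eq_tsum _ y⟩
end

section
/- Let 𝔥 be a Leibniz algebra over a field k. The map ι : 𝔥 → 𝔥 × End_k(𝔥), ι(X) := (X, ad_X), is an injective homomorphism of Leibniz algebras into the hemi-semi-direct product 𝔥 ×_hs 𝔤𝔩(𝔥): it is linear, injective, and satisfies ι([X,Y]) = ([X,Y], ad_{[X,Y]}) = (ad_X(Y), ad_X∘ad_Y − ad_Y∘ad_X) = [ι(X), ι(Y)]_hs for all X,Y ∈ 𝔥. Hence every Leibniz algebra embeds as a subalgebra of a hemi-semi-direct product. -/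
/-- For a Leibniz algebra `𝔥`, the map `ι(X) = (X, ad_X)` is a linear,
injective homomorphism of Leibniz algebras into the hemi-semi-direct product
`𝔥 ×_hs 𝔤𝔩(𝔥)`, whose bracket is `[(v,A),(v',A')] = (A v', A∘A' − A'∘A)`. -/
theorem embedding_into_hemiSemidirect
    {k V : Type*} [Field k] [AddCommGroup V] [Module k V]
    (b : V →ₗ[k] V →ₗ[k] V)
    (hLeib : ∀ X Y Z : V, b X (b Y Z) = b (b X Y) Z + b Y (b X Z)) :
    Function.Injective (fun X : V => ((X, b X) : V × (V →ₗ[k] V))) ∧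
    (∀ (c : k) (X Y : V),
      ((c • X + Y, b (c • X + Y)) : V × (V →ₗ[k] V)) = c • (X, b X) + (Y, b Y)) ∧
    (∀ X Y : V,
      ((b X Y, b (b X Y)) : V × (V →ₗ[k] V))
        = ((b X) Y, b X ∘ₗ b Y - b Y ∘ₗ b X)) := by
  refine ⟨fun X Y h => congrArg Prod.fst h, fun c X Y => by simp [Prod.ext_iff], fun X Y => ?_⟩
  refine Prod.ext rfl ?_
  ext Z
  simp only [LinearMap.sub_apply, LinearMap.comp_apply]
  rw [eq_sub_iff_add_eq]
  exact (hLeib X Y Z).symm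
end

section
/- Let (R,▷) be a left rack and let A be a set with a left rack action of R, i.e. for each r ∈ R a bijection a ↦ r·a of A such that r·(r'·a) = (r▷r')·(r·a) for all r,r' ∈ R, a ∈ A. Then the binary operation on A × R defined by (a,r) ▷ (a',r') := (r·a', r▷r') is again a left rack structure: each left translation is bijective and the self-distributivity law (x ▷ (y ▷ z)) = ((x▷y) ▷ (x▷z)) holds. This rack is called the hemi-semi-direct product A ×_hs R. -/
/-- The hemi-semi-direct product operation on `A × R`:
`(a,r) ▷ (a',r') := (r·a', r▷r')`. -/
def hsRackOp {A R : Type*} (op : R → R → R) (act : R → A → A)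
    (p q : A × R) : A × R :=
  (act p.2 q.1, op p.2 q.2)

/-- Given a left rack `(R,▷)` and a left rack action of `R` on a set `A`
(each `act r` bijective, with `r·(r'·a) = (r▷r')·(r·a)`), the operation
`(a,r) ▷ (a',r') := (r·a', r▷r')` on `A × R` is again a left rack structure:
all left translations are bijective and the self-distributivity law holds. -/
theorem hemiSemidirect_rack
    {A R : Type*} (op : R → R → R) (act : R → A → A)
    (hbij : ∀ r : R, Function.Bijective (op r))
    (hsd : ∀ x y z : R, op x (op y z) = op (op x y) (op x z))
    (hact_bij : ∀ r : R, Function.Bijective (act r))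
    (hact : ∀ (r r' : R) (a : A), act r (act r' a) = act (op r r') (act r a)) :
    (∀ p : A × R, Function.Bijective (hsRackOp op act p)) ∧
    (∀ x y z : A × R,
      hsRackOp op act x (hsRackOp op act y z)
        = hsRackOp op act (hsRackOp op act x y) (hsRackOp op act x z)) := by
  constructor
  · intro p
    have : hsRackOp op act p = Prod.map (act p.2) (op p.2) := by
      funext q; rfl
    rw [this]
    exact (hact_bij p.2).prodMap (hbij p.2)
  · intro x y z
    simp only [hsRackOp, Prod.mk.injEq]
    exact ⟨hact _ _ _, hsd _ _ _⟩
end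

section
/- Let (H, ⊢, ⊣) be a digroup with distinguished element 1 and inversion x ↦ x⁻¹. Define x ▷ y := x ⊢ y ⊣ x⁻¹. Then (H, ▷, 1) is a rack pointed in 1: the self-distributivity x▷(y▷z) = (x▷y)▷(x▷z) holds for all x,y,z ∈ H; for each x ∈ H the map y ↦ x▷y is bijective; and 1▷x = x and x▷1 = 1 for all x ∈ H. -/
/-- Given a digroup `(H, ⊢, ⊣)` with distinguished element `1` and
inversion `x ↦ x⁻¹`, the operation `x ▷ y := x ⊢ y ⊣ x⁻¹` makes `H` a rack pointed
in `1`: self-distributivity holds, each left translation is bijective, and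
`1 ▷ x = x`, `x ▷ 1 = 1`. -/
theorem digroup_to_rack
    {H : Type*} (vd dv : H → H → H) (one : H) (inv : H → H)
    (hvd_assoc : ∀ x y z : H, vd (vd x y) z = vd x (vd y z))
    (hdv_assoc : ∀ x y z : H, dv (dv x y) z = dv x (dv y z))
    (hax2 : ∀ x y z : H, vd x (dv y z) = dv (vd x y) z)
    (hax3 : ∀ x y z : H, dv x (vd y z) = dv x (dv y z))
    (hax4 : ∀ x y z : H, vd (dv x y) z = vd (vd x y) z)
    (hone_vd : ∀ x : H, vd one x = x)
    (hone_dv : ∀ x : H, dv x one = x)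
    (hinv_vd : ∀ x : H, vd x (inv x) = one)
    (hinv_dv : ∀ x : H, dv (inv x) x = one) :
    (∀ x y z : H,
      dv (vd x (dv (vd y z) (inv y))) (inv x)
        = dv (vd (dv (vd x y) (inv x)) (dv (vd x z) (inv x))) (inv (dv (vd x y) (inv x)))) ∧
    (∀ x : H, Function.Bijective (fun y : H => dv (vd x y) (inv x))) ∧
    (∀ x : H, dv (vd one x) (inv one) = x) ∧
    (∀ x : H, dv (vd x one) (inv x) = one) := by
  -- left cancellation: inv x * (x * z) = z
  have h1 : ∀ x z : H, vd (inv x) (vd x z) = z := by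
    intro x z
    rw [← hvd_assoc, ← hax4, hinv_dv, hone_vd]
  -- left cancellation: x * (inv x * z) = z
  have h2 : ∀ x z : H, vd x (vd (inv x) z) = z := by
    intro x z
    rw [← hvd_assoc, hinv_vd, hone_vd]
  -- right cancellation: (y ∘ x) ∘ inv x = y
  have h3 : ∀ x y : H, dv (dv y x) (inv x) = y := by
    intro x y
    rw [hdv_assoc, ← hax3, hinv_vd, hone_dv]
  -- 1 ∘ inv x = inv x
  have h1one : ∀ x : H, dv one (inv x) = inv x := by
    intro x
    rw [← hinv_dv x, hdv_assoc, ← hax3, hinv_vd, hone_dv]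
  -- inv 1 = 1
  have hinvone : inv one = one := by
    rw [← hone_vd (inv one), hinv_vd]
  -- x ▷ 1 = 1
  have hx1 : ∀ x : H, dv (vd x one) (inv x) = one := by
    intro x
    rw [← hax2, h1one, hinv_vd]
  -- uniqueness of inverses
  have huniq : ∀ w u : H, vd w u = one → dv u w = one → inv w = u := by
    intro w u hwu huw
    have hu : dv one u = u := by
      rw [← huw, hdv_assoc, ← hax3, hwu, hone_dv]
    rw [← hu, ← hinv_dv w, hdv_assoc, ← hax3, hwu, hone_dv]
  refine ⟨?_, ?_, ?_, ?_⟩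
  · intro x y z
    set w := dv (vd x y) (inv x) with hw
    set u := vd x (dv (inv y) (inv x)) with hudef
    -- w * u = 1
    have hwu : vd w u = one := by
      rw [hw, hax4, hvd_assoc, hvd_assoc, hudef, h1 x (dv (inv y) (inv x)),
        hax2, hinv_vd, h1one, hinv_vd]
    -- u ∘ w = 1
    have huw : dv u w = one := by
      have hux : dv u x = vd x (inv y) := by
        rw [hudef, ← hax2, hdv_assoc, hinv_dv, hone_dv]
      rw [hw, ← hdv_assoc, hax3, ← hdv_assoc, hux, ← hax2, hinv_dv, hx1]
    have hinvw : inv w = u := huniq w u hwu huw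
    -- compute the right-hand side
    have hwu' : vd w (dv (vd x z) (inv x)) = dv (vd x (vd y z)) (inv x) := by
      rw [hw, hax4, hvd_assoc, hvd_assoc, hax2 (inv x), h1, hax2 y, ← hvd_assoc, hax2, hvd_assoc]
    rw [hwu', hdv_assoc, hinvw, hudef, hax3, ← hdv_assoc (inv x) x, hinv_dv,
      ← hdv_assoc one (inv y), h1one, hax2 x, hdv_assoc]
  · intro x
    refine Function.bijective_iff_has_inverse.mpr ⟨fun z => vd (inv x) (dv z x), ?_, ?_⟩
    · intro y
      simp only
      rw [hdv_assoc, hinv_dv, hone_dv, h1]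
    · intro z
      simp only
      rw [h2, hdv_assoc, ← hax3, hinv_vd, hone_dv]
  · intro x
    rw [hinvone, hone_vd, hone_dv]
  · exact hx1
end

section
/- Let 𝔥 be a finite-dimensional real Leibniz algebra. The operation X ▷ Y := exp(ad_X)(Y) makes 𝔥 a rack pointed in 0: (i) X ▷ (Y ▷ Z) = (X ▷ Y) ▷ (X ▷ Z) for all X,Y,Z ∈ 𝔥; (ii) for each X ∈ 𝔥 the map Y ↦ X ▷ Y is a linear bijection of 𝔥; (iii) 0 ▷ Y = Y and X ▷ 0 = 0 for all X,Y ∈ 𝔥. -/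
/-!
The Leibniz identity says that `D = ad_X` is a derivation of the bracket:
`ad_{D Y} = D ∘ ad_Y - ad_Y ∘ D`. So `ad` intertwines `D` with `L_D + R_{-D}`, where `L_D`, `R_{-D}`
are the commuting operators of composition by `D` on the left and by `-D` on the right, and
exponentiating gives `ad_{exp D Y} = exp D ∘ ad_Y ∘ exp (-D)`, i.e. `exp D` is an automorphism of
the bracket. Exponentiating once more, `exp (ad_{exp D Y}) ∘ exp D = exp D ∘ exp (ad_Y)`, which is
self-distributivity.
-/

open NormedSpace ContinuousLinearMap

section

variable {𝕂 𝔸 M : Type*} [RCLike 𝕂] [NormedRing 𝔸] [NormedAlgebra 𝕂 𝔸] [CompleteSpace 𝔸]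
  [NormedAddCommGroup M] [NormedSpace 𝕂 M] [CompleteSpace M]

theorem exp_apply_eq_of_pow_apply (φ : 𝔸 →L[𝕂] M) (a : 𝔸) (B : M →L[𝕂] M) (m : M)
    (h : ∀ n : ℕ, (B ^ n) m = φ (a ^ n)) : exp B m = φ (exp a) := by
  have hB := (exp_series_hasSum_exp' (𝕂 := 𝕂) B).mapL (apply 𝕂 M m)
  have ha := (exp_series_hasSum_exp' (𝕂 := 𝕂) a).mapL φ
  simp only [apply_apply, smul_apply, h, ← map_smul] at hB
  exact hB.unique ha

/- Operators on a space of the form `F →L[𝕂] G` should enter `exp` only through instantiating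
`M` here: written out directly, `exp` fails to find its `IsTopologicalRing` instance. -/
theorem exp_apply_apply_of_map_pow (μ : 𝔸 →L[𝕂] M →L[𝕂] M) (a : 𝔸)
    (hμ : ∀ n : ℕ, μ (a ^ n) = μ a ^ n) (m : M) : exp (μ a) m = μ (exp a) m :=
  exp_apply_eq_of_pow_apply (μ.flip m) a (μ a) m fun n => by rw [flip_apply, hμ]

end

section

variable {𝕂 E F G : Type*} [RCLike 𝕂] [NormedAddCommGroup E] [NormedSpace 𝕂 E] [CompleteSpace E]
  [NormedAddCommGroup F] [NormedSpace 𝕂 F] [CompleteSpace F]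
  [NormedAddCommGroup G] [NormedSpace 𝕂 G] [CompleteSpace G]

theorem exp_apply_apply_of_leibniz (b : E →L[𝕂] F →L[𝕂] G) (DE : E →L[𝕂] E)
    (DF : F →L[𝕂] F) (DG : G →L[𝕂] G) (hD : ∀ x y, DG (b x y) = b (DE x) y + b x (DF y))
    (x : E) (y : F) : exp DG (b x y) = b (exp DE x) (exp DF y) := by
  let +nondep : NormedAlgebra ℚ ((F →L[𝕂] G) →L[𝕂] F →L[𝕂] G) := .restrictScalars ℚ 𝕂 _
  let +nondep : NormedAlgebra ℚ (F →L[𝕂] F) := .restrictScalars ℚ 𝕂 _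
  set L := compL 𝕂 F G G
  set R := (compL 𝕂 F F G).flip
  have hL : ∀ n : ℕ, L (DG ^ n) = L DG ^ n := fun n => by
    induction n with
    | zero => ext; rfl
    | succ n ih => rw [pow_succ, pow_succ, ← ih]; ext; rfl
  have hR : ∀ n : ℕ, R ((-DF) ^ n) = R (-DF) ^ n := fun n => by
    induction n with
    | zero => ext; rfl
    | succ n ih => rw [pow_succ', pow_succ, ← ih]; ext; rfl
  have hLR : Commute (L DG) (R (-DF)) := by ext; simp [L, R]
  have hb : ∀ x, b (DE x) = (L DG + R (-DF)) (b x) := fun x => by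
    ext y; simp [L, R, hD]
  have hpow : ∀ n : ℕ, ((L DG + R (-DF)) ^ n) (b x) = b ((DE ^ n) x) := fun n => by
    induction n with
    | zero => rfl
    | succ n ih => rw [pow_succ', mul_apply_eq_comp, ih, pow_succ', mul_apply_eq_comp, hb]
  have hexp := exp_apply_eq_of_pow_apply (b.comp (apply 𝕂 E x)) DE _ (b x) hpow
  rw [exp_add_of_commute hLR, mul_apply_eq_comp, exp_apply_apply_of_map_pow R _ hR,
    exp_apply_apply_of_map_pow L _ hL] at hexp
  have hinv : exp (-DF) * exp DF = 1 := by
    rw [← exp_add_of_commute (Commute.refl DF).neg_left, neg_add_cancel, exp_zero]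
  have h := DFunLike.congr_fun hexp (exp DF y)
  simp only [L, R, compL_apply, flip_apply, comp_apply, apply_apply] at h
  rw [← h, ← mul_apply_eq_comp (exp (-DF)), hinv, one_apply_eq_self]

end

/-- For a finite-dimensional real Leibniz algebra `𝔥`, the operation
`X ▷ Y := exp(ad_X)(Y)` makes `𝔥` a rack pointed in `0`: (i) self-distributivity,
(ii) each left translation `Y ↦ X ▷ Y` is a linear bijection, (iii) `0 ▷ Y = Y` and
`X ▷ 0 = 0`. Here `ad_X = b X`. -/
theorem exponential_rack
    {V : Type*} [NormedAddCommGroup V] [NormedSpace ℝ V] [FiniteDimensional ℝ V]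
    (b : V →L[ℝ] V →L[ℝ] V)
    (hLeib : ∀ X Y Z : V, b X (b Y Z) = b (b X Y) Z + b Y (b X Z)) :
    (∀ X Y Z : V,
      exp (b X) (exp (b Y) Z)
        = exp (b (exp (b X) Y)) (exp (b X) Z)) ∧
    (∀ X : V, Function.Bijective (fun Y : V => exp (b X) Y)) ∧
    (∀ (X : V) (c : ℝ) (Y Z : V),
      exp (b X) (c • Y + Z) = c • exp (b X) Y + exp (b X) Z) ∧
    (∀ Y : V, exp (b (0 : V)) Y = Y) ∧
    (∀ X : V, exp (b X) (0 : V) = 0) := by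
  have : CompleteSpace V := FiniteDimensional.complete ℝ V
  let +nondep : NormedAlgebra ℚ (V →L[ℝ] V) := .restrictScalars ℚ ℝ _
  have hsemiconj (X Y : V) : SemiconjBy (exp (b X)) (b Y) (b (exp (b X) Y)) :=
    ext fun Z => exp_apply_apply_of_leibniz b (b X) (b X) (b X) (hLeib X) Y Z
  refine ⟨fun X Y Z => ?_, fun X => ?_, fun X c Y Z => by simp, fun Y => by simp,
    fun X => map_zero _⟩
  · simpa only [mul_apply_eq_comp] using congr($((hsemiconj X Y).exp_right) Z)
  · exact ContinuousLinearMap.isUnit_iff_bijective.1 (isUnit_exp (b X))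
end

section
/- Let 𝔥 be a finite-dimensional real Leibniz algebra. For every X, Y ∈ 𝔥 one has exp(ad_{exp(ad_X)(Y)}) = exp(ad_X) ∘ exp(ad_Y) ∘ exp(ad_X)⁻¹ as linear automorphisms of 𝔥. Consequently the set R_𝔥 := {(X, exp(ad_X)) : X ∈ 𝔥} is closed under the rack product (X,α) ▷ (Y,β) := (α(Y), α∘β∘α⁻¹), i.e. it is a subrack of 𝔥 ×_hs Aut(𝔥). -/
/-!
The Leibniz identity says that `b : V → End V` intertwines `b X` with the inner derivation
`ad (b X) = ⁅b X, ·⁆` of `End V`. Intertwining passes to exponentials by comparing the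
exponential series termwise, and `exp (ad a)` is conjugation by `exp a`, because `ad a` is the
difference of the commuting left and right multiplications by `a`. Hence
`b (exp (b X) Y) = exp (b X) * b Y * exp (-b X)`, and `exp` commutes with conjugation by the unit
`exp (b X)`.
-/

open NormedSpace

namespace ContinuousLinearMap

theorem map_exp_eq_of_map_pow {𝕜 𝔸 𝔹 G : Type*} [RCLike 𝕜]
    [NormedRing 𝔸] [NormedAlgebra 𝕜 𝔸] [CompleteSpace 𝔸]
    [NormedRing 𝔹] [NormedAlgebra 𝕜 𝔹] [CompleteSpace 𝔹] [NormedAddCommGroup G] [NormedSpace 𝕜 G]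
    (φ : 𝔸 →L[𝕜] G) (ψ : 𝔹 →L[𝕜] G) {x : 𝔸} {y : 𝔹}
    (h : ∀ n : ℕ, φ (x ^ n) = ψ (y ^ n)) : φ (exp x) = ψ (exp y) := by
  have hx := (exp_series_hasSum_exp' (𝕂 := 𝕜) x).mapL φ
  have hy := (exp_series_hasSum_exp' (𝕂 := 𝕜) y).mapL ψ
  simp only [map_smul, h] at hx hy
  exact hx.unique hy

section Intertwining

variable {𝕜 E F : Type*} [RCLike 𝕜] [NormedAddCommGroup E] [NormedSpace 𝕜 E]
  [NormedAddCommGroup F] [NormedSpace 𝕜 F]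

theorem comp_pow_of_comp_eq (f : E →L[𝕜] F) {A : E →L[𝕜] E} {B : F →L[𝕜] F}
    (h : f ∘L A = B ∘L f) (n : ℕ) : f ∘L (A ^ n) = (B ^ n) ∘L f := by
  induction n with
  | zero => rfl
  | succ n ih =>
    rw [pow_succ, pow_succ, mul_def, mul_def, ← comp_assoc, ih, comp_assoc, h, comp_assoc]

theorem comp_exp_of_comp_eq [CompleteSpace E] [CompleteSpace F] (f : E →L[𝕜] F)
    {A : E →L[𝕜] E} {B : F →L[𝕜] F} (h : f ∘L A = B ∘L f) : f ∘L exp A = exp B ∘L f :=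
  map_exp_eq_of_map_pow (compL 𝕜 E E F f) ((compL 𝕜 E F F).flip f) (comp_pow_of_comp_eq f h)

end Intertwining

section InnerDerivation

variable (𝕜 : Type*) {𝔸 : Type*} [RCLike 𝕜] [NormedRing 𝔸] [NormedAlgebra 𝕜 𝔸]

noncomputable def ad (a : 𝔸) : 𝔸 →L[𝕜] 𝔸 := mul 𝕜 𝔸 a - (mul 𝕜 𝔸).flip a

@[simp]
theorem ad_apply (a x : 𝔸) : ad 𝕜 a x = ⁅a, x⁆ := by
  simp [ad, Ring.lie_def]

theorem pow_mul_apply (a : 𝔸) (n : ℕ) : mul 𝕜 𝔸 a ^ n = mul 𝕜 𝔸 (a ^ n) := by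
  induction n with
  | zero => ext; simp
  | succ n ih => ext x; simp_all [pow_succ, mul_assoc]

theorem pow_neg_flip_mul_apply (a : 𝔸) (n : ℕ) :
    (-(mul 𝕜 𝔸).flip a) ^ n = (mul 𝕜 𝔸).flip ((-a) ^ n) := by
  induction n with
  | zero => ext; simp
  | succ n ih =>
    rw [pow_succ, ih, pow_succ']
    ext x
    simp [mul_assoc]

variable [CompleteSpace 𝔸]

theorem exp_mul_apply (a : 𝔸) : exp (mul 𝕜 𝔸 a) = mul 𝕜 𝔸 (exp a) :=
  map_exp_eq_of_map_pow (.id 𝕜 _) (mul 𝕜 𝔸) (pow_mul_apply 𝕜 a)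

theorem exp_neg_flip_mul_apply (a : 𝔸) :
    exp (-(mul 𝕜 𝔸).flip a) = (mul 𝕜 𝔸).flip (exp (-a)) :=
  map_exp_eq_of_map_pow (.id 𝕜 _) (mul 𝕜 𝔸).flip (pow_neg_flip_mul_apply 𝕜 a)

theorem exp_ad_apply (a x : 𝔸) : exp (ad 𝕜 a) x = exp a * x * exp (-a) := by
  let _ : NormedAlgebra ℚ (𝔸 →L[𝕜] 𝔸) := NormedAlgebra.restrictScalars ℚ 𝕜 _
  have hcomm : Commute (mul 𝕜 𝔸 a) (-(mul 𝕜 𝔸).flip a) := by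
    ext x
    simp [mul_assoc]
  rw [ad, sub_eq_add_neg, exp_add_of_commute hcomm, exp_mul_apply, exp_neg_flip_mul_apply]
  simp [mul_assoc]

end InnerDerivation

end ContinuousLinearMap

theorem NormedSpace.exp_conj_exp {𝔸 : Type*} [NormedRing 𝔸] [NormedAlgebra ℚ 𝔸]
    [CompleteSpace 𝔸] (a x : 𝔸) : exp (exp a * x * exp (-a)) = exp a * exp x * exp (-a) :=
  exp_units_conj ⟨exp a, exp (-a), by simp [← exp_add_of_commute (Commute.neg_right (.refl a))],
    by simp [← exp_add_of_commute (Commute.neg_left (.refl a))]⟩ x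

/-- For a finite-dimensional real Leibniz algebra `𝔥` and `X, Y ∈ 𝔥`,
`exp(ad_{exp(ad_X)(Y)}) = exp(ad_X) ∘ exp(ad_Y) ∘ exp(ad_X)⁻¹` (the inverse of
`exp(ad_X)` being `exp(−ad_X)`). Consequently the set
`R_𝔥 = {(X, exp(ad_X))}` is closed under the rack product
`(X,α) ▷ (Y,β) = (α(Y), α∘β∘α⁻¹)`, i.e. it is a subrack of `𝔥 ×_hs Aut(𝔥)`. -/
theorem R_h_closed_under_rack_product
    {V : Type*} [NormedAddCommGroup V] [NormedSpace ℝ V] [FiniteDimensional ℝ V]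
    (b : V →L[ℝ] V →L[ℝ] V)
    (hLeib : ∀ X Y Z : V, b X (b Y Z) = b (b X Y) Z + b Y (b X Z))
    (X Y : V) :
    exp (b (exp (b X) Y))
      = exp (b X) ∘L exp (b Y) ∘L exp (-(b X)) := by
  have hrep : b ∘L b X = ContinuousLinearMap.ad ℝ (b X) ∘L b := by
    ext Y Z
    simp only [ContinuousLinearMap.comp_apply, ContinuousLinearMap.ad_apply, Ring.lie_def]
    exact eq_sub_of_add_eq (hLeib X Y Z).symm
  have hconj : b (exp (b X) Y) = exp (b X) * b Y * exp (-(b X)) := by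
    rw [← ContinuousLinearMap.exp_ad_apply ℝ]
    exact congr($(ContinuousLinearMap.comp_exp_of_comp_eq b hrep) Y)
  let _ : NormedAlgebra ℚ (V →L[ℝ] V) := NormedAlgebra.restrictScalars ℚ ℝ _
  rw [hconj, exp_conj_exp]
  rfl
end
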